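/- For every nonnegative integer k, the reverse Bessel polynomials satisfy p_{k+1}(x) = x \sum_{l=0}^{k} \binom{k}{l} 2^l (l - 1/2)_l p_{k-l}(x), where (y)_l is the falling factorial. -/

import Mathlib

open Finset Nat

/-- The reverse Bessel polynomial `p n`. -/
noncomputable def pB (n : ℕ) (x : ℝ) : ℝ :=
  if n = 0 then 1 else
    ∑ k ∈ Finset.Icc 1 n,
      ((2 * n - k - 1).factorial : ℝ) / (2 ^ (n - k) * (k - 1).factorial * (n - k).factorial) * x ^ k

/-!
Since `2 ^ l * (l - 1/2)_l = (2l)! / (2 ^ l * l!)`, comparing coefficients of `x ^ (t + 2)` turns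
the identity into a convolution for the coefficients `b t m` of `x ^ (t + 1)` in `p (t + m + 1)`:
`b (t + 1) m = ∑_{l + m' = m} (t + m + 1).choose l * b 0 l * b t m'`. After clearing factorials
this reads `∑_{l + m' = m} C(2l, l) * C(2m' + t, m') / (m' + t + 1) = C(2m + t + 1, m) / (t + 1)`.
The ballot number `(t + 1) / (m' + t + 1) * C(2m' + t, m')` is `C(2m' + t, m') - C(2m' + t, m' - 1)`,
so the left side is a difference of two sums `∑_{l + m' = n} C(2l, l) * C(2m' + b, m')`, each equal to
`∑_{i ≤ n} C(2n + b + 1, i)` by a double induction on `n` and `b` using Pascal's rule.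
-/

namespace Nat

theorem centralBinom_succ_eq_two_mul_choose (m : ℕ) :
    (m + 1).centralBinom = 2 * (2 * m + 1).choose m := by
  rw [centralBinom_eq_two_mul_choose, show 2 * (m + 1) = 2 * m + 1 + 1 by ring,
    choose_succ_succ, choose_symm_half, ← two_mul]

theorem sum_range_choose_succ (N t : ℕ) :
    ∑ i ∈ range (N + 1), (t + 1).choose i =
      ∑ i ∈ range (N + 1), t.choose i + ∑ i ∈ range N, t.choose i := by
  simp only [sum_range_succ' _ N, choose_succ_succ, choose_zero_right, sum_add_distrib]
  ring

theorem sum_antidiagonal_centralBinom_mul_choose (n b : ℕ) :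
    ∑ p ∈ antidiagonal n, p.1.centralBinom * (2 * p.2 + b).choose p.2 =
      ∑ i ∈ range (n + 1), (2 * n + b + 1).choose i := by
  induction n generalizing b with
  | zero => simp
  | succ n ihn =>
    induction b with
    | zero =>
      have hdouble : ∀ p ∈ antidiagonal n,
          p.1.centralBinom * (2 * (p.2 + 1) + 0).choose (p.2 + 1)
            = 2 * (p.1.centralBinom * (2 * p.2 + 1).choose p.2) := fun p _ => by
        rw [add_zero, ← centralBinom_eq_two_mul_choose, centralBinom_succ_eq_two_mul_choose]
        ring
      rw [Finset.Nat.sum_antidiagonal_succ', sum_congr rfl hdouble, ← mul_sum, ihn,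
        show 2 * (n + 1) + 0 + 1 = 2 * n + 1 + 1 + 1 by ring,
        sum_range_choose_succ (n + 1) (2 * n + 1 + 1), sum_range_succ _ (n + 1)]
      simp only [mul_zero, add_zero, choose_zero_right, mul_one, centralBinom_eq_two_mul_choose]
      ring_nf
    | succ b ihb =>
      have hpascal : ∀ p ∈ antidiagonal n,
          p.1.centralBinom * (2 * (p.2 + 1) + (b + 1)).choose (p.2 + 1)
            = p.1.centralBinom * (2 * (p.2 + 1) + b).choose (p.2 + 1)
              + p.1.centralBinom * (2 * p.2 + (b + 2)).choose p.2 := fun p _ => by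
        rw [show 2 * (p.2 + 1) + (b + 1) = 2 * p.2 + (b + 2) + 1 by ring, choose_succ_succ',
          show 2 * (p.2 + 1) + b = 2 * p.2 + (b + 2) by ring]
        ring
      rw [Finset.Nat.sum_antidiagonal_succ'] at ihb ⊢
      simp only [mul_zero, zero_add, choose_zero_right, mul_one] at ihb ⊢
      rw [sum_congr rfl hpascal, sum_add_distrib, ← add_assoc, ihb, ihn,
        show 2 * (n + 1) + (b + 1) + 1 = 2 * (n + 1) + b + 1 + 1 by ring,
        sum_range_choose_succ (n + 1) (2 * (n + 1) + b + 1),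
        show 2 * n + (b + 2) + 1 = 2 * (n + 1) + b + 1 by ring]

theorem choose_succ_sub_choose (m s : ℕ) :
    ((2 * m + s + 2).choose (m + 1) : ℝ) - (2 * m + s + 2).choose m
      = (s + 1) * (2 * m + s + 2).choose (m + 1) / (m + s + 2) := by
  have h := choose_succ_right_eq (2 * m + s + 2) m
  rw [show 2 * m + s + 2 - m = m + s + 2 by omega] at h
  have h' : ((2 * m + s + 2).choose (m + 1) : ℝ) * (m + 1)
      = (2 * m + s + 2).choose m * (m + s + 2) := by exact_mod_cast h
  field_simp
  linear_combination h'

theorem sum_antidiagonal_centralBinom_mul_choose_div (n s : ℕ) :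
    ∑ p ∈ antidiagonal n, (p.1.centralBinom : ℝ) * ((2 * p.2 + s).choose p.2 / (p.2 + s + 1)) =
      (2 * n + s + 1).choose n / (s + 1) := by
  have hE (n b : ℕ) : ∑ p ∈ antidiagonal n, (p.1.centralBinom : ℝ) * (2 * p.2 + b).choose p.2 =
      ∑ i ∈ range (n + 1), ((2 * n + b + 1).choose i : ℝ) := by
    exact_mod_cast sum_antidiagonal_centralBinom_mul_choose n b
  rcases n with _ | n
  · simp
  have hterm : ∀ p ∈ antidiagonal n,
      (p.1.centralBinom : ℝ) * ((2 * (p.2 + 1) + s).choose (p.2 + 1) / ((p.2 + 1 : ℕ) + s + 1))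
        * (s + 1) = p.1.centralBinom * (2 * (p.2 + 1) + s).choose (p.2 + 1)
          - p.1.centralBinom * (2 * p.2 + (s + 2)).choose p.2 := fun p _ => by
    rw [← mul_sub, show 2 * (p.2 + 1) + s = 2 * p.2 + s + 2 by ring,
      show 2 * p.2 + (s + 2) = 2 * p.2 + s + 2 by ring, choose_succ_sub_choose]
    push_cast
    ring
  have hsplit := hE (n + 1) s
  rw [Finset.Nat.sum_antidiagonal_succ', sum_range_succ] at hsplit
  rw [eq_div_iff (by positivity), sum_mul, Nat.sum_antidiagonal_succ', sum_congr rfl hterm,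
    sum_sub_distrib, hE n (s + 2), show 2 * n + (s + 2) + 1 = 2 * (n + 1) + s + 1 by ring]
  simp only [mul_zero, zero_add, choose_zero_right, Nat.cast_one, CharP.cast_eq_zero] at hsplit ⊢
  field_simp
  linear_combination hsplit

end Nat

/-- The coefficient of `x ^ (t + 1)` in `pB (t + m + 1)`, see `pB_eq_sum`. -/
noncomputable def besselCoeff (t m : ℕ) : ℝ := (2 * m + t)! / (2 ^ m * t ! * m !)

theorem besselCoeff_zero_succ (l : ℕ) :
    besselCoeff 0 (l + 1) = (2 * l + 1) * besselCoeff 0 l := by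
  simp only [besselCoeff, add_zero, show 2 * (l + 1) = 2 * l + 1 + 1 by ring, factorial_succ]
  push_cast
  field_simp
  ring

theorem two_pow_mul_descPochhammer_eval (l : ℕ) :
    2 ^ l * (descPochhammer ℝ l).eval ((l : ℝ) - 1 / 2) = besselCoeff 0 l := by
  induction l with
  | zero => simp [besselCoeff]
  | succ l ih =>
    rw [descPochhammer_succ_left, Polynomial.eval_mul, Polynomial.eval_comp, Polynomial.eval_X,
      Polynomial.eval_sub, Polynomial.eval_X, Polynomial.eval_one, Nat.cast_succ,
      show (l : ℝ) + 1 - 1 / 2 - 1 = l - 1 / 2 by ring, besselCoeff_zero_succ, ← ih, pow_succ]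
    ring

theorem besselCoeff_succ_left (s m : ℕ) :
    besselCoeff (s + 1) m = ∑ p ∈ antidiagonal m,
      ((s + m + 1).choose p.1 : ℝ) * besselCoeff 0 p.1 * besselCoeff s p.2 := by
  have hterm : ∀ p ∈ antidiagonal m,
      ((s + m + 1).choose p.1 : ℝ) * besselCoeff 0 p.1 * besselCoeff s p.2
        = (s + m + 1)! / (2 ^ m * s !) *
          (p.1.centralBinom * ((2 * p.2 + s).choose p.2 / (p.2 + s + 1))) := by
    rintro ⟨l, m'⟩ hp
    rw [HasAntidiagonal.mem_antidiagonal] at hp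
    subst hp
    simp only [besselCoeff, add_zero, factorial_zero, Nat.cast_one, mul_one]
    rw [centralBinom_eq_two_mul_choose, two_mul, show s + (l + m') + 1 = l + (s + m' + 1) by ring,
      show 2 * m' + s = m' + (m' + s) by ring, cast_add_choose, cast_add_choose, cast_add_choose,
      show s + m' + 1 = m' + s + 1 by ring, factorial_succ (m' + s)]
    push_cast
    field_simp
    ring
  rw [sum_congr rfl hterm, ← mul_sum, sum_antidiagonal_centralBinom_mul_choose_div, besselCoeff,
    show 2 * m + (s + 1) = m + (s + m + 1) by ring,
    show 2 * m + s + 1 = m + (s + m + 1) by ring, cast_add_choose, factorial_succ s]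
  push_cast
  field_simp

theorem pB_zero (x : ℝ) : pB 0 x = 1 := if_pos rfl

theorem pB_eq_sum {n : ℕ} (hn : n ≠ 0) (x : ℝ) :
    pB n x = ∑ t ∈ range n, besselCoeff t (n - 1 - t) * x ^ (t + 1) := by
  rw [pB, if_neg hn, ← Ico_add_one_right_eq_Icc, sum_Ico_eq_sum_range, add_tsub_cancel_right]
  refine sum_congr rfl fun t ht => ?_
  have htn : t < n := mem_range.mp ht
  rw [besselCoeff, add_comm 1 t, show 2 * n - (t + 1) - 1 = 2 * (n - 1 - t) + t by omega,
    show n - (t + 1) = n - 1 - t by omega, add_tsub_cancel_right]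

theorem reverse_bessel_step_identity (k : ℕ) (x : ℝ) :
    pB (k + 1) x =
      x * ∑ l ∈ Finset.range (k + 1),
        (k.choose l : ℝ) * 2 ^ l * (descPochhammer ℝ l).eval ((l : ℝ) - 1 / 2)
          * pB (k - l) x := by
  have hcoeff : ∀ s ∈ range k, besselCoeff (s + 1) (k - (s + 1)) * x ^ (s + 1 + 1) =
      ∑ l ∈ range (k - s), (k.choose l : ℝ) * besselCoeff 0 l *
        (besselCoeff s (k - l - 1 - s) * x ^ (s + 1)) * x := by
    intro s hs
    have hsk : s < k := mem_range.mp hs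
    rw [besselCoeff_succ_left, Nat.sum_antidiagonal_eq_sum_range_succ_mk, sum_mul]
    refine sum_congr (by congr 1; omega) fun l _ => ?_
    rw [show s + (k - (s + 1)) + 1 = k by omega, show k - (s + 1) - l = k - l - 1 - s by omega]
    ring
  have hpB : ∀ l ∈ range k, (k.choose l : ℝ) * besselCoeff 0 l * pB (k - l) x =
      ∑ s ∈ range (k - l), (k.choose l : ℝ) * besselCoeff 0 l *
        (besselCoeff s (k - l - 1 - s) * x ^ (s + 1)) := by
    intro l hl
    rw [pB_eq_sum (by have := mem_range.mp hl; omega), mul_sum]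
  simp_rw [mul_assoc (k.choose _ : ℝ) (2 ^ _), two_pow_mul_descPochhammer_eval]
  rw [pB_eq_sum k.add_one_ne_zero, sum_range_succ', add_tsub_cancel_right, sum_range_succ,
    Nat.sub_self, pB_zero, sum_congr rfl hcoeff, sum_congr rfl hpB,
    sum_comm' (t' := range k) (s' := fun l => range (k - l)) (by intros; simp only [mem_range]; omega)]
  simp only [← sum_mul, choose_self, tsub_zero, Nat.cast_one]
  ring
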